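/- (Admissibility of Cut in the classical Gentzen calculus.) Let C be the calculus consisting of Identity, the common structural rules of Weakening and Contraction, and all introduction rules (including the axioms ∅▷⊤ and ⊥▷∅), and let C' be C extended by Cut. Then a sequent Γ▷Δ is derivable from the empty set of premises in C' if and only if it is derivable from the empty set of premises in C. -/
import Mathlib


/-- Propositional formulas: atoms, conjunction, disjunction, De Morgan negation, ⊤, ⊥. -/
inductive Fm : Type where
  | atom : ℕ → Fm
  | conj : Fm → Fm → Fm
  | disj : Fm → Fm → Fm
  | neg  : Fm → Fm
  | top  : Fm
  | bot  : Fm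
deriving DecidableEq

/-- A sequent is a pair of finite multisets of formulas. -/
abbrev Sqnt : Type := Multiset Fm × Multiset Fm

/-- A formula is an atom. -/
def isAtom (φ : Fm) : Prop := ∃ i, φ = Fm.atom i

/-- A sequent is atomic if every formula in it is an atom. -/
def AtomicSeq (s : Sqnt) : Prop := (∀ φ ∈ s.1, isAtom φ) ∧ (∀ φ ∈ s.2, isAtom φ)

/-- Derivability of a sequent from a set `S` of sequents in a super-Belnap calculus.
The calculus always contains the common structural rules of Weakening and Contraction.
The `Prop` flags switch further rules on and off:
`i` = the introduction rules (incl. the axioms `∅▷⊤` and `⊥▷∅`),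
`e` = the elimination rules, `d` = Identity, `c` = Cut, `l` = Limited Cut. -/
inductive Drv (i e d c l : Prop) (S : Set Sqnt) : Sqnt → Prop where
  | prem {s} : s ∈ S → Drv i e d c l S s
  -- common structural rules: Weakening and Contraction
  | wkL (φ : Fm) {Γ Δ} : Drv i e d c l S (Γ, Δ) → Drv i e d c l S (φ ::ₘ Γ, Δ)
  | wkR (φ : Fm) {Γ Δ} : Drv i e d c l S (Γ, Δ) → Drv i e d c l S (Γ, φ ::ₘ Δ)
  | ctrL {φ Γ Δ} : Drv i e d c l S (φ ::ₘ φ ::ₘ Γ, Δ) → Drv i e d c l S (φ ::ₘ Γ, Δ)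
  | ctrR {φ Γ Δ} : Drv i e d c l S (Γ, φ ::ₘ φ ::ₘ Δ) → Drv i e d c l S (Γ, φ ::ₘ Δ)
  -- introduction rules
  | andR {φ ψ Γ Δ} : i → Drv i e d c l S (Γ, φ ::ₘ Δ) → Drv i e d c l S (Γ, ψ ::ₘ Δ) →
      Drv i e d c l S (Γ, Fm.conj φ ψ ::ₘ Δ)
  | andL {φ ψ Γ Δ} : i → Drv i e d c l S (φ ::ₘ ψ ::ₘ Γ, Δ) →
      Drv i e d c l S (Fm.conj φ ψ ::ₘ Γ, Δ)
  | orL {φ ψ Γ Δ} : i → Drv i e d c l S (φ ::ₘ Γ, Δ) → Drv i e d c l S (ψ ::ₘ Γ, Δ) →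
      Drv i e d c l S (Fm.disj φ ψ ::ₘ Γ, Δ)
  | orR {φ ψ Γ Δ} : i → Drv i e d c l S (Γ, φ ::ₘ ψ ::ₘ Δ) →
      Drv i e d c l S (Γ, Fm.disj φ ψ ::ₘ Δ)
  | negR {φ Γ Δ} : i → Drv i e d c l S (φ ::ₘ Γ, Δ) → Drv i e d c l S (Γ, Fm.neg φ ::ₘ Δ)
  | negL {φ Γ Δ} : i → Drv i e d c l S (Γ, φ ::ₘ Δ) → Drv i e d c l S (Fm.neg φ ::ₘ Γ, Δ)
  | topR : i → Drv i e d c l S (0, {Fm.top})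
  | botL : i → Drv i e d c l S ({Fm.bot}, 0)
  -- elimination rules
  | andRE1 {φ ψ Γ Δ} : e → Drv i e d c l S (Γ, Fm.conj φ ψ ::ₘ Δ) → Drv i e d c l S (Γ, φ ::ₘ Δ)
  | andRE2 {φ ψ Γ Δ} : e → Drv i e d c l S (Γ, Fm.conj φ ψ ::ₘ Δ) → Drv i e d c l S (Γ, ψ ::ₘ Δ)
  | andLE {φ ψ Γ Δ} : e → Drv i e d c l S (Fm.conj φ ψ ::ₘ Γ, Δ) →
      Drv i e d c l S (φ ::ₘ ψ ::ₘ Γ, Δ)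
  | orLE1 {φ ψ Γ Δ} : e → Drv i e d c l S (Fm.disj φ ψ ::ₘ Γ, Δ) → Drv i e d c l S (φ ::ₘ Γ, Δ)
  | orLE2 {φ ψ Γ Δ} : e → Drv i e d c l S (Fm.disj φ ψ ::ₘ Γ, Δ) → Drv i e d c l S (ψ ::ₘ Γ, Δ)
  | orRE {φ ψ Γ Δ} : e → Drv i e d c l S (Γ, Fm.disj φ ψ ::ₘ Δ) →
      Drv i e d c l S (Γ, φ ::ₘ ψ ::ₘ Δ)
  | negRE {φ Γ Δ} : e → Drv i e d c l S (Γ, Fm.neg φ ::ₘ Δ) → Drv i e d c l S (φ ::ₘ Γ, Δ)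
  | negLE {φ Γ Δ} : e → Drv i e d c l S (Fm.neg φ ::ₘ Γ, Δ) → Drv i e d c l S (Γ, φ ::ₘ Δ)
  | topLE {Γ Δ} : e → Drv i e d c l S (Fm.top ::ₘ Γ, Δ) → Drv i e d c l S (Γ, Δ)
  | botRE {Γ Δ} : e → Drv i e d c l S (Γ, Fm.bot ::ₘ Δ) → Drv i e d c l S (Γ, Δ)
  -- Identity
  | ident (φ : Fm) : d → Drv i e d c l S ({φ}, {φ})
  -- Cut
  | cut {φ Γ Γ' Δ Δ'} : c → Drv i e d c l S (Γ, φ ::ₘ Δ) → Drv i e d c l S (φ ::ₘ Γ', Δ') →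
      Drv i e d c l S (Γ + Γ', Δ + Δ')
  -- Limited Cut
  | lcut1 {φ Γ Δ} : l → Drv i e d c l S (0, {φ}) → Drv i e d c l S (φ ::ₘ Γ, Δ) →
      Drv i e d c l S (Γ, Δ)
  | lcut2 {φ Γ Δ} : l → Drv i e d c l S (Γ, φ ::ₘ Δ) → Drv i e d c l S ({φ}, 0) →
      Drv i e d c l S (Γ, Δ)


/-! ### Auxiliary material for cut admissibility -/

def val (v : ℕ → Bool) : Fm → Bool
  | .atom n => v n
  | .conj a b => val v a && val v b
  | .disj a b => val v a || val v b
  | .neg a => !val v a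
  | .top => true
  | .bot => false

def Valid (s : Sqnt) : Prop :=
  ∀ v : ℕ → Bool, (∀ φ ∈ s.1, val v φ = true) → ∃ φ ∈ s.2, val v φ = true

theorem sound {s : Sqnt} (h : Drv True False True True False (∅ : Set Sqnt) s) :
    Valid s := by
  induction h with
  | prem h => cases h
  | wkL φ h ih =>
      intro v hv
      exact ih v (fun ψ hψ => hv ψ (Multiset.mem_cons_of_mem hψ))
  | wkR φ h ih =>
      intro v hv
      obtain ⟨ψ, hψ, hval⟩ := ih v hv
      exact ⟨ψ, Multiset.mem_cons_of_mem hψ, hval⟩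
  | ctrL h ih =>
      intro v hv
      refine ih v ?_
      intro ψ hψ
      rcases Multiset.mem_cons.1 hψ with rfl | hψ
      · exact hv ψ (Multiset.mem_cons_self _ _)
      · rcases Multiset.mem_cons.1 hψ with rfl | hψ
        · exact hv ψ (Multiset.mem_cons_self _ _)
        · exact hv ψ (Multiset.mem_cons_of_mem hψ)
  | ctrR h ih =>
      intro v hv
      obtain ⟨ψ, hψ, hval⟩ := ih v hv
      rcases Multiset.mem_cons.1 hψ with rfl | hψ
      · exact ⟨ψ, Multiset.mem_cons_self _ _, hval⟩
      · rcases Multiset.mem_cons.1 hψ with rfl | hψ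
        · exact ⟨ψ, Multiset.mem_cons_self _ _, hval⟩
        · exact ⟨ψ, Multiset.mem_cons_of_mem hψ, hval⟩
  | andR _ h1 h2 ih1 ih2 =>
      intro v hv
      obtain ⟨ψ, hψ, hval⟩ := ih1 v hv
      rcases Multiset.mem_cons.1 hψ with rfl | hψ
      · obtain ⟨χ, hχ, hval2⟩ := ih2 v hv
        rcases Multiset.mem_cons.1 hχ with rfl | hχ
        · exact ⟨_, Multiset.mem_cons_self _ _, by simp [val, hval, hval2]⟩
        · exact ⟨χ, Multiset.mem_cons_of_mem hχ, hval2⟩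
      · exact ⟨ψ, Multiset.mem_cons_of_mem hψ, hval⟩
  | andL _ h ih =>
      intro v hv
      refine ih v ?_
      have hc := hv _ (Multiset.mem_cons_self _ _)
      simp only [val, Bool.and_eq_true] at hc
      intro ψ hψ
      rcases Multiset.mem_cons.1 hψ with rfl | hψ
      · exact hc.1
      · rcases Multiset.mem_cons.1 hψ with rfl | hψ
        · exact hc.2
        · exact hv ψ (Multiset.mem_cons_of_mem hψ)
  | orL _ h1 h2 ih1 ih2 =>
      intro v hv
      have hc := hv _ (Multiset.mem_cons_self _ _)
      simp only [val, Bool.or_eq_true] at hc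
      have hv' : ∀ ψ ∈ _, val v ψ = true :=
        fun ψ hψ => hv ψ (Multiset.mem_cons_of_mem hψ)
      rcases hc with hc | hc
      · refine ih1 v ?_
        intro ψ hψ
        rcases Multiset.mem_cons.1 hψ with rfl | hψ
        · exact hc
        · exact hv' ψ hψ
      · refine ih2 v ?_
        intro ψ hψ
        rcases Multiset.mem_cons.1 hψ with rfl | hψ
        · exact hc
        · exact hv' ψ hψ
  | orR _ h ih =>
      intro v hv
      obtain ⟨ψ, hψ, hval⟩ := ih v hv
      rcases Multiset.mem_cons.1 hψ with rfl | hψ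
      · exact ⟨_, Multiset.mem_cons_self _ _, by simp [val, hval]⟩
      · rcases Multiset.mem_cons.1 hψ with rfl | hψ
        · exact ⟨_, Multiset.mem_cons_self _ _, by simp [val, hval]⟩
        · exact ⟨ψ, Multiset.mem_cons_of_mem hψ, hval⟩
  | @negR φ Γ Δ _ h ih =>
      intro v hv
      by_cases hφ : val v φ = true
      · have hv' : ∀ ψ ∈ φ ::ₘ Γ, val v ψ = true := by
          intro ψ hψ
          rcases Multiset.mem_cons.1 hψ with rfl | hψ
          · exact hφ
          · exact hv ψ hψ
        obtain ⟨ψ, hψ, hval⟩ := ih v hv'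
        exact ⟨ψ, Multiset.mem_cons_of_mem hψ, hval⟩
      · refine ⟨_, Multiset.mem_cons_self _ _, ?_⟩
        simp only [Bool.not_eq_true] at hφ
        simp [val, hφ]
  | @negL φ Γ Δ _ h ih =>
      intro v hv
      have hc := hv _ (Multiset.mem_cons_self _ _)
      simp only [val, Bool.not_eq_true'] at hc
      obtain ⟨ψ, hψ, hval⟩ := ih v (fun ψ hψ => hv ψ (Multiset.mem_cons_of_mem hψ))
      rcases Multiset.mem_cons.1 hψ with rfl | hψ
      · rw [hc] at hval; cases hval
      · exact ⟨ψ, hψ, hval⟩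
  | topR _ => exact fun v _ => ⟨Fm.top, Multiset.mem_singleton_self _, rfl⟩
  | botL _ =>
      intro v hv
      have := hv Fm.bot (Multiset.mem_singleton_self _)
      simp [val] at this
  | ident φ _ =>
      exact fun v hv => ⟨φ, Multiset.mem_singleton_self _, hv φ (Multiset.mem_singleton_self _)⟩
  | @cut φ Γ Γ' Δ Δ' _ h1 h2 ih1 ih2 =>
      intro v hv
      have hvΓ : ∀ ψ ∈ Γ, val v ψ = true :=
        fun ψ hψ => hv ψ (Multiset.mem_add.2 (Or.inl hψ))
      have hvΓ' : ∀ ψ ∈ Γ', val v ψ = true :=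
        fun ψ hψ => hv ψ (Multiset.mem_add.2 (Or.inr hψ))
      obtain ⟨ψ, hψ, hval⟩ := ih1 v hvΓ
      rcases Multiset.mem_cons.1 hψ with rfl | hψ
      · have hv' : ∀ χ ∈ ψ ::ₘ Γ', val v χ = true := by
          intro χ hχ
          rcases Multiset.mem_cons.1 hχ with rfl | hχ
          · exact hval
          · exact hvΓ' χ hχ
        obtain ⟨χ, hχ, hval2⟩ := ih2 v hv'
        exact ⟨χ, Multiset.mem_add.2 (Or.inr hχ), hval2⟩
      · exact ⟨ψ, Multiset.mem_add.2 (Or.inl hψ), hval⟩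
  | andRE1 he _ _ => exact he.elim
  | andRE2 he _ _ => exact he.elim
  | andLE he _ _ => exact he.elim
  | orLE1 he _ _ => exact he.elim
  | orLE2 he _ _ => exact he.elim
  | orRE he _ _ => exact he.elim
  | negRE he _ _ => exact he.elim
  | negLE he _ _ => exact he.elim
  | topLE he _ _ => exact he.elim
  | botRE he _ _ => exact he.elim
  | lcut1 hl _ _ _ _ => exact hl.elim
  | lcut2 hl _ _ _ _ => exact hl.elim

/-- General weakening to larger multisets. -/
theorem Drv.wk {i e d c l : Prop} {S : Set Sqnt} {Γ Δ Γ' Δ' : Multiset Fm}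
    (hΓ : Γ ≤ Γ') (hΔ : Δ ≤ Δ') (h : Drv i e d c l S (Γ, Δ)) :
    Drv i e d c l S (Γ', Δ') := by
  obtain ⟨k, rfl⟩ := Multiset.le_iff_exists_add.1 hΓ
  obtain ⟨m, rfl⟩ := Multiset.le_iff_exists_add.1 hΔ
  clear hΓ hΔ
  induction k using Multiset.induction with
  | empty =>
      simp only [add_zero]
      induction m using Multiset.induction with
      | empty => simpa using h
      | cons a m ihm =>
          have : Δ + (a ::ₘ m) = a ::ₘ (Δ + m) := by
            rw [Multiset.add_cons]
          rw [this]
          exact Drv.wkR a ihm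
  | cons a k ihk =>
      have : Γ + (a ::ₘ k) = a ::ₘ (Γ + k) := by
        rw [Multiset.add_cons]
      rw [this]
      exact Drv.wkL a ihk

def cx : Fm → ℕ
  | .atom _ => 0
  | .conj a b => cx a + cx b + 1
  | .disj a b => cx a + cx b + 1
  | .neg a => cx a + 1
  | .top => 1
  | .bot => 1

def msr (Γ Δ : Multiset Fm) : ℕ := (Γ.map cx).sum + (Δ.map cx).sum

theorem mem_msr_le {Γ : Multiset Fm} {φ : Fm} (h : φ ∈ Γ) :
    cx φ + ((Γ.erase φ).map cx).sum = (Γ.map cx).sum := by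
  conv_rhs => rw [← Multiset.cons_erase h]
  simp

theorem complete : ∀ (n : ℕ) (Γ Δ : Multiset Fm), msr Γ Δ ≤ n → Valid (Γ, Δ) →
    Drv True False True False False (∅ : Set Sqnt) (Γ, Δ) := by
  intro n
  induction n with
  | zero =>
      intro Γ Δ hm hV
      -- all formulas are atoms or ⊤/⊥ of cx ≥ 1... at measure 0 all are atoms
      have hat : ∀ φ ∈ Γ + Δ, ∃ i, φ = Fm.atom i := by
        intro φ hφ
        have hcx : cx φ = 0 := by
          rcases Multiset.mem_add.1 hφ with hφ | hφ
          · have := mem_msr_le (Γ := Γ) hφ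
            simp only [msr] at hm; omega
          · have := mem_msr_le (Γ := Δ) hφ
            simp only [msr] at hm; omega
        cases φ with
        | atom i => exact ⟨i, rfl⟩
        | conj a b => simp [cx] at hcx
        | disj a b => simp [cx] at hcx
        | neg a => simp [cx] at hcx
        | top => simp [cx] at hcx
        | bot => simp [cx] at hcx
      -- valid atomic sequent: some atom occurs on both sides
      classical
      have hv' : ∀ φ ∈ Γ, val (fun n => decide (Fm.atom n ∈ Γ)) φ = true := by
        intro φ hφ
        obtain ⟨j, rfl⟩ := hat φ (Multiset.mem_add.2 (Or.inl hφ))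
        simp [val, hφ]
      obtain ⟨ψ, hψΔ, hvψ⟩ := hV (fun n => decide (Fm.atom n ∈ Γ)) hv'
      obtain ⟨j, rfl⟩ := hat ψ (Multiset.mem_add.2 (Or.inr hψΔ))
      simp only [val, decide_eq_true_eq] at hvψ
      exact Drv.wk (Multiset.singleton_le.2 hvψ) (Multiset.singleton_le.2 hψΔ)
        (Drv.ident _ trivial)
  | succ n ih =>
      intro Γ Δ hm hV
      classical
      by_cases hA : (∀ φ ∈ Γ, isAtom φ) ∧ (∀ φ ∈ Δ, isAtom φ)
      · -- atomic case: same argument as above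
        have hv' : ∀ φ ∈ Γ, val (fun n => decide (Fm.atom n ∈ Γ)) φ = true := by
          intro φ hφ
          obtain ⟨j, rfl⟩ := hA.1 φ hφ
          simp [val, hφ]
        obtain ⟨ψ, hψΔ, hvψ⟩ := hV (fun n => decide (Fm.atom n ∈ Γ)) hv'
        obtain ⟨j, rfl⟩ := hA.2 ψ hψΔ
        simp only [val, decide_eq_true_eq] at hvψ
        exact Drv.wk (Multiset.singleton_le.2 hvψ) (Multiset.singleton_le.2 hψΔ)
          (Drv.ident _ trivial)
      · rw [Decidable.not_and_iff_or_not] at hA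
        push_neg at hA
        rcases hA with ⟨φ, hφΓ, hφn⟩ | ⟨φ, hφΔ, hφn⟩
        · -- decompose φ on the left
          have hΓ : Γ = φ ::ₘ Γ.erase φ := (Multiset.cons_erase hφΓ).symm
          have hms := mem_msr_le (Γ := Γ) hφΓ
          rw [hΓ]
          rw [hΓ] at hV
          set Γ₀ := Γ.erase φ with hΓ₀
          cases φ with
          | atom j => exact absurd ⟨j, rfl⟩ hφn
          | bot =>
              exact Drv.wk (by simp [Multiset.singleton_le]) (Multiset.zero_le _)
                (Drv.botL trivial)
          | top =>
              refine Drv.wkL _ (ih Γ₀ Δ ?_ ?_)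
              · simp only [msr, cx, Multiset.map_cons, Multiset.sum_cons] at hm hms ⊢; omega
              · intro v hv
                refine hV v ?_
                intro ψ hψ
                rcases Multiset.mem_cons.1 hψ with rfl | hψ
                · rfl
                · exact hv ψ hψ
          | conj a b =>
              refine Drv.andL trivial (ih (a ::ₘ b ::ₘ Γ₀) Δ ?_ ?_)
              · simp only [msr, cx, Multiset.map_cons, Multiset.sum_cons] at hm hms ⊢; omega
              · intro v hv
                refine hV v ?_
                intro ψ hψ
                rcases Multiset.mem_cons.1 hψ with rfl | hψ
                · have h1 := hv _ (Multiset.mem_cons_self _ _)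
                  have h2 := hv _ (Multiset.mem_cons_of_mem (Multiset.mem_cons_self _ _))
                  simp [val, h1, h2]
                · exact hv ψ (Multiset.mem_cons_of_mem (Multiset.mem_cons_of_mem hψ))
          | disj a b =>
              refine Drv.orL trivial (ih (a ::ₘ Γ₀) Δ ?_ ?_) (ih (b ::ₘ Γ₀) Δ ?_ ?_)
              · simp only [msr, cx, Multiset.map_cons, Multiset.sum_cons] at hm hms ⊢; omega
              · intro v hv
                refine hV v ?_
                intro ψ hψ
                rcases Multiset.mem_cons.1 hψ with rfl | hψ
                · have h1 := hv _ (Multiset.mem_cons_self _ _)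
                  simp [val, h1]
                · exact hv ψ (Multiset.mem_cons_of_mem hψ)
              · simp only [msr, cx, Multiset.map_cons, Multiset.sum_cons] at hm hms ⊢; omega
              · intro v hv
                refine hV v ?_
                intro ψ hψ
                rcases Multiset.mem_cons.1 hψ with rfl | hψ
                · have h1 := hv _ (Multiset.mem_cons_self _ _)
                  simp [val, h1]
                · exact hv ψ (Multiset.mem_cons_of_mem hψ)
          | neg a =>
              refine Drv.negL trivial (ih Γ₀ (a ::ₘ Δ) ?_ ?_)
              · simp only [msr, cx, Multiset.map_cons, Multiset.sum_cons] at hm hms ⊢; omega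
              · intro v hv
                by_cases ha : val v a = true
                · exact ⟨a, Multiset.mem_cons_self _ _, ha⟩
                · have hv2 : ∀ ψ ∈ Fm.neg a ::ₘ Γ₀, val v ψ = true := by
                    intro ψ hψ
                    rcases Multiset.mem_cons.1 hψ with rfl | hψ
                    · simp only [Bool.not_eq_true] at ha
                      simp [val, ha]
                    · exact hv ψ hψ
                  obtain ⟨χ, hχ, hvχ⟩ := hV v hv2
                  exact ⟨χ, Multiset.mem_cons_of_mem hχ, hvχ⟩
        · -- decompose φ on the right
          have hΔ : Δ = φ ::ₘ Δ.erase φ := (Multiset.cons_erase hφΔ).symm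
          have hms := mem_msr_le (Γ := Δ) hφΔ
          rw [hΔ]
          rw [hΔ] at hV
          set Δ₀ := Δ.erase φ with hΔ₀
          cases φ with
          | atom j => exact absurd ⟨j, rfl⟩ hφn
          | top =>
              exact Drv.wk (Multiset.zero_le _) (by simp [Multiset.singleton_le])
                (Drv.topR trivial)
          | bot =>
              refine Drv.wkR _ (ih Γ Δ₀ ?_ ?_)
              · simp only [msr, cx, Multiset.map_cons, Multiset.sum_cons] at hm hms ⊢; omega
              · intro v hv
                obtain ⟨χ, hχ, hvχ⟩ := hV v hv
                rcases Multiset.mem_cons.1 hχ with rfl | hχ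
                · simp [val] at hvχ
                · exact ⟨χ, hχ, hvχ⟩
          | conj a b =>
              refine Drv.andR trivial (ih Γ (a ::ₘ Δ₀) ?_ ?_) (ih Γ (b ::ₘ Δ₀) ?_ ?_)
              · simp only [msr, cx, Multiset.map_cons, Multiset.sum_cons] at hm hms ⊢; omega
              · intro v hv
                obtain ⟨χ, hχ, hvχ⟩ := hV v hv
                rcases Multiset.mem_cons.1 hχ with rfl | hχ
                · simp only [val, Bool.and_eq_true] at hvχ
                  exact ⟨a, Multiset.mem_cons_self _ _, hvχ.1⟩
                · exact ⟨χ, Multiset.mem_cons_of_mem hχ, hvχ⟩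
              · simp only [msr, cx, Multiset.map_cons, Multiset.sum_cons] at hm hms ⊢; omega
              · intro v hv
                obtain ⟨χ, hχ, hvχ⟩ := hV v hv
                rcases Multiset.mem_cons.1 hχ with rfl | hχ
                · simp only [val, Bool.and_eq_true] at hvχ
                  exact ⟨b, Multiset.mem_cons_self _ _, hvχ.2⟩
                · exact ⟨χ, Multiset.mem_cons_of_mem hχ, hvχ⟩
          | disj a b =>
              refine Drv.orR trivial (ih Γ (a ::ₘ b ::ₘ Δ₀) ?_ ?_)
              · simp only [msr, cx, Multiset.map_cons, Multiset.sum_cons] at hm hms ⊢; omega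
              · intro v hv
                obtain ⟨χ, hχ, hvχ⟩ := hV v hv
                rcases Multiset.mem_cons.1 hχ with rfl | hχ
                · simp only [val, Bool.or_eq_true] at hvχ
                  rcases hvχ with h | h
                  · exact ⟨a, Multiset.mem_cons_self _ _, h⟩
                  · exact ⟨b, Multiset.mem_cons_of_mem (Multiset.mem_cons_self _ _), h⟩
                · exact ⟨χ, Multiset.mem_cons_of_mem (Multiset.mem_cons_of_mem hχ), hvχ⟩
          | neg a =>
              refine Drv.negR trivial (ih (a ::ₘ Γ) Δ₀ ?_ ?_)
              · simp only [msr, cx, Multiset.map_cons, Multiset.sum_cons] at hm hms ⊢; omega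
              · intro v hv
                have ha := hv _ (Multiset.mem_cons_self _ _)
                obtain ⟨χ, hχ, hvχ⟩ := hV v (fun ψ hψ => hv ψ (Multiset.mem_cons_of_mem hψ))
                rcases Multiset.mem_cons.1 hχ with rfl | hχ
                · simp only [val, Bool.not_eq_true'] at hvχ
                  rw [ha] at hvχ; cases hvχ
                · exact ⟨χ, hχ, hvχ⟩

theorem cutfree_to_cut {s : Sqnt}
    (h : Drv True False True False False (∅ : Set Sqnt) s) :
    Drv True False True True False (∅ : Set Sqnt) s := by
  induction h with
  | prem h => cases h
  | wkL φ _ ih => exact Drv.wkL φ ih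
  | wkR φ _ ih => exact Drv.wkR φ ih
  | ctrL _ ih => exact Drv.ctrL ih
  | ctrR _ ih => exact Drv.ctrR ih
  | andR _ _ _ ih1 ih2 => exact Drv.andR trivial ih1 ih2
  | andL _ _ ih => exact Drv.andL trivial ih
  | orL _ _ _ ih1 ih2 => exact Drv.orL trivial ih1 ih2
  | orR _ _ ih => exact Drv.orR trivial ih
  | negR _ _ ih => exact Drv.negR trivial ih
  | negL _ _ ih => exact Drv.negL trivial ih
  | topR _ => exact Drv.topR trivial
  | botL _ => exact Drv.botL trivial
  | andRE1 he _ _ => exact he.elim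
  | andRE2 he _ _ => exact he.elim
  | andLE he _ _ => exact he.elim
  | orLE1 he _ _ => exact he.elim
  | orLE2 he _ _ => exact he.elim
  | orRE he _ _ => exact he.elim
  | negRE he _ _ => exact he.elim
  | negLE he _ _ => exact he.elim
  | topLE he _ _ => exact he.elim
  | botRE he _ _ => exact he.elim
  | ident φ _ => exact Drv.ident φ trivial
  | cut hc _ _ _ _ => exact hc.elim
  | lcut1 hl _ _ _ _ => exact hl.elim
  | lcut2 hl _ _ _ _ => exact hl.elim

/-- Admissibility of Cut: in the calculus consisting of Identity, the common structural
rules, and all introduction rules, a sequent is provable from the empty set of premises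
with Cut iff it is provable without Cut. -/
theorem stmt8 (s : Sqnt) :
    Drv True False True True False (∅ : Set Sqnt) s ↔
    Drv True False True False False (∅ : Set Sqnt) s := by
  constructor
  · intro h
    exact complete (msr s.1 s.2) s.1 s.2 le_rfl (sound h)
  · exact cutfree_to_cut
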